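/- arXiv:2505.19520 — 2 statements merged into one kernel-verified Lean document; each statement's English description precedes it below -/
import Mathlib

section
/- Let A be a set of at least four alternatives, let D ⊆ L(A) be a domain, and let a ∈ A. If D is connected, then the restricted domain D_{-a} = D_{A∖{a}} is connected. -/
/-!
Common definitions for formalizing Condorcet domains.

A linear order on a finite set `A : Finset α` of alternatives is encoded as a
duplicate-free list enumerating the elements of `A` from most preferred (head)
to least preferred (last).
-/

variable {α : Type*}

/-- `l` is a linear order on the finite set `A` of alternatives. -/
def IsLinOrd [DecidableEq α] (A : Finset α) (l : List α) : Prop :=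
  l.Nodup ∧ l.toFinset = A

/-- The restriction of a linear order `l` to the subset `S` of alternatives. -/
def restrictOrd [DecidableEq α] (l : List α) (S : Finset α) : List α :=
  l.filter (fun x => decide (x ∈ S))

/-- The restriction of a domain `D` to the subset `S` of alternatives. -/
def restrictDom [DecidableEq α] (D : Set (List α)) (S : Finset α) : Set (List α) :=
  (fun l => restrictOrd l S) '' D

/-- The never-condition `x N (k+1)`: no linear order in `E` ranks `x` in
position `k+1` (positions are counted from `1`, so `k : Fin 3` is the
zero-based index).  `k = 0` is a never-top condition, `k = 2` a never-bottom
condition. -/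
def NeverCond (E : Set (List α)) (x : α) (k : Fin 3) : Prop :=
  ∀ l ∈ E, l[(k : ℕ)]? ≠ some x

/-- The set of never-conditions (encoded as pairs `(x, k)`) satisfied by a
domain `E` on the triple `T`. -/
def NeverConds (T : Finset α) (E : Set (List α)) : Set (α × Fin 3) :=
  {p | p.1 ∈ T ∧ NeverCond E p.1 p.2}

/-- The set of peak-pit conditions (never-top or never-bottom conditions)
satisfied by a domain `E` on the triple `T`. -/
def PeakPitConds (T : Finset α) (E : Set (List α)) : Set (α × Fin 3) :=
  {p | p.1 ∈ T ∧ (p.2 = 0 ∨ p.2 = 2) ∧ NeverCond E p.1 p.2}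

/-- `D` is a Condorcet domain on `A`: a set of linear orders on `A` whose
restriction to every triple of distinct alternatives satisfies some
never-condition. -/
def IsCondorcetDomain [DecidableEq α] (A : Finset α) (D : Set (List α)) : Prop :=
  (∀ l ∈ D, IsLinOrd A l) ∧
    ∀ a b c : α, a ∈ A → b ∈ A → c ∈ A → a ≠ b → a ≠ c → b ≠ c →
      ∃ x ∈ ({a, b, c} : Finset α), ∃ k : Fin 3,
        NeverCond (restrictDom D {a, b, c}) x k

/-- `D` is a peak-pit Condorcet domain on `A`: a set of linear orders on `A`
whose restriction to every triple of distinct alternatives satisfies a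
never-top or a never-bottom condition. -/
def IsPeakPitDomain [DecidableEq α] (A : Finset α) (D : Set (List α)) : Prop :=
  (∀ l ∈ D, IsLinOrd A l) ∧
    ∀ a b c : α, a ∈ A → b ∈ A → c ∈ A → a ≠ b → a ≠ c → b ≠ c →
      ∃ x ∈ ({a, b, c} : Finset α),
        NeverCond (restrictDom D {a, b, c}) x 0 ∨
          NeverCond (restrictDom D {a, b, c}) x 2

/-- Two linear orders are alike if they differ by a swap of two adjacent
alternatives. -/
def Alike (R T : List α) : Prop :=
  ∃ (l₁ l₂ : List α) (x y : α), x ≠ y ∧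
    R = l₁ ++ x :: y :: l₂ ∧ T = l₁ ++ y :: x :: l₂

/-- `P` is a path of alike linear orders on `L(A)`. -/
def IsPathOn [DecidableEq α] (A : Finset α) (P : List (List α)) : Prop :=
  P ≠ [] ∧ (∀ l ∈ P, IsLinOrd A l) ∧ P.Chain' Alike

/-- `P` is a path of alike linear orders on `L(A)` connecting `R` and `T`. -/
def IsPath [DecidableEq α] (A : Finset α) (P : List (List α)) (R T : List α) : Prop :=
  IsPathOn A P ∧ P.head? = some R ∧ P.getLast? = some T

/-- `P` is a geodesic on `L(A)` connecting `R` and `T`: a path of alike linear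
orders of minimal length among all such paths. -/
def IsGeodesic [DecidableEq α] (A : Finset α) (P : List (List α)) (R T : List α) : Prop :=
  IsPath A P R T ∧ ∀ Q : List (List α), IsPath A Q R T → P.length ≤ Q.length

/-- The switching pair of alternatives between two alike linear orders (as an
unordered pair); `none` if the two lists do not differ. -/
def switchPair? [DecidableEq α] (R T : List α) : Option (Sym2 α) :=
  ((R.zip T).find? (fun p => decide (p.1 ≠ p.2))).map (fun p => Sym2.mk p.1 p.2)

/-- `S(P)`: the sequence of switching pairs of a path of alike linear orders. -/
def switchSeq [DecidableEq α] (P : List (List α)) : List (Sym2 α) :=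
  (P.zip P.tail).filterMap (fun p => switchPair? p.1 p.2)

/-- The restriction of a path to the subset `B`: restrict every member and
remove consecutive duplicates. -/
def restrictPath [DecidableEq α] (P : List (List α)) (B : Finset α) : List (List α) :=
  (P.map (fun l => restrictOrd l B)).destutter (· ≠ ·)

/-- `D` is connected: any two of its members are joined by a path of alike
linear orders lying entirely in `D`. -/
def ConnectedDomain [DecidableEq α] (A : Finset α) (D : Set (List α)) : Prop :=
  ∀ R ∈ D, ∀ T ∈ D, ∃ P : List (List α), IsPath A P R T ∧ ∀ l ∈ P, l ∈ D

/-- `D` is directly connected: any two of its members are joined by a geodesic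
lying entirely in `D`. -/
def DirectlyConnectedDomain [DecidableEq α] (A : Finset α) (D : Set (List α)) : Prop :=
  ∀ R ∈ D, ∀ T ∈ D, ∃ P : List (List α), IsGeodesic A P R T ∧ ∀ l ∈ P, l ∈ D

/-- Two unordered pairs of alternatives are disjoint. -/
def DisjointPair (p q : Sym2 α) : Prop := ∀ x : α, x ∈ p → x ∉ q

/-- One swap of an adjacent disjoint pair of switching pairs in a sequence of
switching pairs. -/
inductive AdjSwap : List (Sym2 α) → List (Sym2 α) → Prop
  | swap (l₁ l₂ : List (Sym2 α)) (p q : Sym2 α) (h : DisjointPair p q) :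
      AdjSwap (l₁ ++ p :: q :: l₂) (l₁ ++ q :: p :: l₂)

/-- Two paths are equivalent if their sequences of switching pairs differ by a
finite number of swaps of adjacent disjoint pairs of switching pairs. -/
def PathEquiv [DecidableEq α] (P Q : List (List α)) : Prop :=
  Relation.ReflTransGen AdjSwap (switchSeq P) (switchSeq Q)

/-- Two domains are isomorphic if some bijection between the underlying sets of
alternatives maps one domain onto the other (acting position-wise on linear
orders). -/
def DomIsomorphic (A B : Finset α) (D E : Set (List α)) : Prop :=
  ∃ f : α → α, Set.BijOn f ↑A ↑B ∧ E = (fun l => l.map f) '' D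

/-!
Restricting to `S` maps each member of a path to its restriction, and one swap of adjacent
alternatives either becomes a swap of adjacent alternatives of `S` or is invisible on `S`. Removing
the repetitions from the restricted sequence thus leaves a path in `L(S)` with the restricted
endpoints whose members are restrictions of members of `D`.
-/

namespace List

theorem head?_destutter' (R : α → α → Prop) [DecidableRel R] (a : α) (l : List α) :
    (l.destutter' R a).head? = some a := by
  induction l generalizing a with
  | nil => rfl
  | cons b l ih =>
    rw [destutter'_cons]
    split_ifs
    · rfl
    · exact ih a

theorem head?_destutter (R : α → α → Prop) [DecidableRel R] :
    ∀ l : List α, (l.destutter R).head? = l.head?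
  | [] => rfl
  | a :: l => head?_destutter' R a l

variable [DecidableEq α]

theorem getLast?_destutter'_ne (a : α) (l : List α) :
    (l.destutter' (· ≠ ·) a).getLast? = (a :: l).getLast? := by
  induction l generalizing a with
  | nil => rfl
  | cons b l ih =>
    by_cases hab : a = b
    · subst hab
      rw [destutter'_cons_neg _ (not_not.mpr rfl), ih, getLast?_cons_cons]
    · rw [destutter'_cons_pos _ hab, getLast?_cons_of_ne_nil (destutter'_ne_nil _ _), ih,
        getLast?_cons_cons]

theorem getLast?_destutter_ne : ∀ l : List α, (l.destutter (· ≠ ·)).getLast? = l.getLast?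
  | [] => rfl
  | a :: l => getLast?_destutter'_ne a l

theorem IsChain.destutter'_ne {r : α → α → Prop} {a : α} {l : List α}
    (h : (a :: l).IsChain (fun x y => x = y ∨ r x y)) : (l.destutter' (· ≠ ·) a).IsChain r := by
  induction l generalizing a with
  | nil => exact isChain_singleton a
  | cons b l ih =>
    obtain ⟨hab, hbl⟩ := isChain_cons_cons.mp h
    by_cases heq : a = b
    · subst heq
      rw [destutter'_cons_neg _ (not_not.mpr rfl)]
      exact ih hbl
    · rw [destutter'_cons_pos _ heq]
      refine List.isChain_cons.mpr ⟨fun c hc => ?_, ih hbl⟩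
      rw [head?_destutter', Option.mem_some_iff] at hc
      exact hc ▸ hab.resolve_left heq

theorem IsChain.destutter_ne {r : α → α → Prop} :
    ∀ {l : List α}, l.IsChain (fun x y => x = y ∨ r x y) → (l.destutter (· ≠ ·)).IsChain r
  | [], _ => isChain_nil
  | _ :: _, h => h.destutter'_ne

end List

section

variable [DecidableEq α]

theorem IsLinOrd.restrictOrd {A S : Finset α} {l : List α} (h : IsLinOrd A l) (hS : S ⊆ A) :
    IsLinOrd S (restrictOrd l S) := by
  obtain ⟨hnd, rfl⟩ := h
  refine ⟨hnd.filter _, ?_⟩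
  ext x
  simp only [_root_.restrictOrd, List.mem_toFinset, List.mem_filter, decide_eq_true_eq]
  exact ⟨And.right, fun hx => ⟨List.mem_toFinset.mp (hS hx), hx⟩⟩

theorem Alike.restrictOrd {R T : List α} (h : Alike R T) (S : Finset α) :
    restrictOrd R S = restrictOrd T S ∨ Alike (restrictOrd R S) (restrictOrd T S) := by
  obtain ⟨l₁, l₂, x, y, hxy, rfl, rfl⟩ := h
  by_cases hx : x ∈ S <;> by_cases hy : y ∈ S
  · right
    exact ⟨l₁.filter (· ∈ S), l₂.filter (· ∈ S), x, y, hxy,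
      by simp [_root_.restrictOrd, hx, hy], by simp [_root_.restrictOrd, hx, hy]⟩
  all_goals left; simp [_root_.restrictOrd, hx, hy]

theorem IsPath.restrictPath {A S : Finset α} {P : List (List α)} {R T : List α}
    (hP : IsPath A P R T) (hS : S ⊆ A) :
    IsPath S (restrictPath P S) (restrictOrd R S) (restrictOrd T S) := by
  obtain ⟨⟨hne, hlin, hchain⟩, hhead, hlast⟩ := hP
  have hsub : (_root_.restrictPath P S).Sublist (P.map (restrictOrd · S)) :=
    List.destutter_sublist _ _
  refine ⟨⟨?_, fun l hl => ?_, ?_⟩, ?_, ?_⟩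
  · simpa [_root_.restrictPath, List.destutter_eq_nil] using hne
  · obtain ⟨p, hp, rfl⟩ := List.mem_map.mp (hsub.subset hl)
    exact (hlin p hp).restrictOrd hS
  · exact List.IsChain.destutter_ne <|
      (List.isChain_map _).mpr (hchain.imp fun _ _ h => h.restrictOrd S)
  · rw [_root_.restrictPath, List.head?_destutter, List.head?_map, hhead, Option.map_some]
  · rw [_root_.restrictPath, List.getLast?_destutter_ne, List.getLast?_map, hlast,
      Option.map_some]

theorem mem_restrictDom_of_mem_restrictPath {D : Set (List α)} {S : Finset α}
    {P : List (List α)} (hPD : ∀ p ∈ P, p ∈ D) {l : List α} (hl : l ∈ restrictPath P S) :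
    l ∈ restrictDom D S := by
  obtain ⟨p, hp, rfl⟩ := List.mem_map.mp ((List.destutter_sublist _ _).subset hl)
  exact ⟨p, hPD p hp, rfl⟩

theorem ConnectedDomain.restrictDom {A S : Finset α} {D : Set (List α)}
    (h : ConnectedDomain A D) (hS : S ⊆ A) : ConnectedDomain S (restrictDom D S) := by
  rintro _ ⟨R, hR, rfl⟩ _ ⟨T, hT, rfl⟩
  obtain ⟨P, hP, hPD⟩ := h R hR T hT
  exact ⟨restrictPath P S, hP.restrictPath hS, fun _ => mem_restrictDom_of_mem_restrictPath hPD⟩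

end

theorem connected_restriction_general [DecidableEq α] (A : Finset α)
    (D : Set (List α)) (a : α)
    (hconn : ConnectedDomain A D) :
    ConnectedDomain (A.erase a) (restrictDom D (A.erase a)) :=
  hconn.restrictDom (A.erase_subset a)

/-- If `A` has at least four alternatives, `D ⊆ L(A)` is a domain,
`a ∈ A`, and `D` is connected, then `D_{-a}` is connected. -/
theorem connected_restriction [DecidableEq α] (A : Finset α) (hA : 4 ≤ A.card)
    (D : Set (List α)) (hD : ∀ l ∈ D, IsLinOrd A l) (a : α) (ha : a ∈ A)
    (hconn : ConnectedDomain A D) :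
    ConnectedDomain (A.erase a) (restrictDom D (A.erase a)) :=
  connected_restriction_general A D a hconn
end

section
/- Let D ⊆ L(A) be a peak-pit Condorcet domain and let 𝒜 and ℬ be equivalent paths of alike linear orders such that D ∪ K(𝒜) is a peak-pit Condorcet domain. Then D ∪ K(ℬ) is also a peak-pit Condorcet domain, and it satisfies exactly the same set of never-conditions as D ∪ K(𝒜) (that is, for every triple of distinct alternatives a,b,c ∈ A and every never-condition, (D ∪ K(ℬ))_{{a,b,c}} satisfies it if and only if (D ∪ K(𝒜))_{{a,b,c}} does). -/
/-!
Common definitions for formalizing Condorcet domains.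

A linear order on a finite set `A : Finset α` of alternatives is encoded as a
duplicate-free list enumerating the elements of `A` from most preferred (head)
to least preferred (last).
-/

variable {α : Type*}

/-!
Restricted to a set `S` of alternatives, a step of a path of alike linear orders either swaps
the two alternatives of its switching pair, if both lie in `S`, or does nothing. So the
restriction of a path is determined by its restricted first order and its sequence of switching
pairs. When `S` has at most three elements, two disjoint switching pairs cannot both lie in `S`,
so one of two consecutive disjoint steps is idle on `S` and exchanging them does not change the
set of restricted orders visited. Hence equivalent paths from the same order have the same
restrictions to all triples, and so do `D ∪ K(𝒜)` and `D ∪ K(ℬ)`.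
-/

open Equiv

section

variable [DecidableEq α]

def swapWithin (S : Finset α) (p : Sym2 α) (l : List α) : List α :=
  Sym2.lift ⟨fun x y => if x ∈ S ∧ y ∈ S then l.map (swap x y) else l,
    fun x y => by simp only [swap_comm, and_comm]⟩ p

lemma swapWithin_mk (S : Finset α) (x y : α) (l : List α) :
    swapWithin S s(x, y) l = if x ∈ S ∧ y ∈ S then l.map (swap x y) else l := rfl

def swapTrace (S : Finset α) (l : List α) : List (Sym2 α) → List (List α)
  | [] => [l]
  | p :: s => l :: swapTrace S (swapWithin S p l) s

lemma mem_swapTrace_self (S : Finset α) (l : List α) (s : List (Sym2 α)) :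
    l ∈ swapTrace S l s := by
  cases s <;> simp [swapTrace]

lemma DisjointPair.four_le_card {S : Finset α} {x y u v : α} (h : DisjointPair s(x, y) s(u, v))
    (hxy : x ≠ y) (huv : u ≠ v) (hx : x ∈ S) (hy : y ∈ S) (hu : u ∈ S) (hv : v ∈ S) :
    4 ≤ S.card := by
  have hxuv := h x (Sym2.mem_mk_left x y)
  have hyuv := h y (Sym2.mem_mk_right x y)
  simp only [Sym2.mem_iff, not_or] at hxuv hyuv
  have hcard : ({x, y, u, v} : Finset α).card = 4 := by
    rw [Finset.card_insert_of_notMem (by simp [hxy, hxuv.1, hxuv.2]),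
      Finset.card_insert_of_notMem (by simp [hyuv.1, hyuv.2]),
      Finset.card_insert_of_notMem (by simp [huv]), Finset.card_singleton]
  have hsub : ({x, y, u, v} : Finset α) ⊆ S := by
    simp only [Finset.insert_subset_iff, Finset.singleton_subset_iff]
    exact ⟨hx, hy, hu, hv⟩
  exact hcard ▸ Finset.card_le_card hsub

lemma swapWithin_eq_self_or_eq_self {S : Finset α} (hS : S.card ≤ 3) {p q : Sym2 α}
    (h : DisjointPair p q) :
    (∀ l, swapWithin S p l = l) ∨ ∀ l, swapWithin S q l = l := by
  induction p using Sym2.ind with | _ x y =>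
  induction q using Sym2.ind with | _ u v =>
  simp only [swapWithin_mk]
  by_cases hxy : x = y
  · subst hxy
    simp
  by_cases huv : u = v
  · subst huv
    simp
  by_cases hxyS : x ∈ S ∧ y ∈ S
  · refine .inr fun l => if_neg fun huvS => ?_
    have := h.four_le_card hxy huv hxyS.1 hxyS.2 huvS.1 huvS.2
    omega
  · exact .inl fun l => if_neg hxyS

lemma mem_swapTrace_cons_cons_comm {S : Finset α} (hS : S.card ≤ 3) {p q : Sym2 α}
    (h : DisjointPair p q) (l m : List α) (s : List (Sym2 α)) :
    m ∈ swapTrace S l (p :: q :: s) ↔ m ∈ swapTrace S l (q :: p :: s) := by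
  rcases swapWithin_eq_self_or_eq_self hS h with hp | hq
  · have := mem_swapTrace_self S (swapWithin S q l) s
    simp only [swapTrace, hp, List.mem_cons]
    grind
  · have := mem_swapTrace_self S (swapWithin S p l) s
    simp only [swapTrace, hq, List.mem_cons]
    grind

lemma mem_swapTrace_append_congr {S : Finset α} {t t' : List (Sym2 α)}
    (h : ∀ l m, m ∈ swapTrace S l t ↔ m ∈ swapTrace S l t') (s : List (Sym2 α))
    (l m : List α) :
    m ∈ swapTrace S l (s ++ t) ↔ m ∈ swapTrace S l (s ++ t') := by
  induction s generalizing l with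
  | nil => exact h l m
  | cons p s ih => simp only [List.cons_append, swapTrace, List.mem_cons, ih]

lemma mem_swapTrace_iff_of_reflTransGen {S : Finset α} (hS : S.card ≤ 3)
    {s s' : List (Sym2 α)} (h : Relation.ReflTransGen AdjSwap s s') (l m : List α) :
    m ∈ swapTrace S l s ↔ m ∈ swapTrace S l s' := by
  induction h with
  | refl => rfl
  | tail _ hstep ih =>
    cases hstep with
    | swap t t' p q hpq =>
      exact ih.trans (mem_swapTrace_append_congr
        (fun l m => mem_swapTrace_cons_cons_comm hS hpq l m t') t l m)

lemma switchPair?_append_cons_cons {x y : α} (hxy : x ≠ y) (l₁ l₂ : List α) :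
    switchPair? (l₁ ++ x :: y :: l₂) (l₁ ++ y :: x :: l₂) = some s(x, y) := by
  induction l₁ with
  | nil => simp [switchPair?, hxy]
  | cons a l₁ ih => simpa [switchPair?, List.find?] using ih

lemma map_swap_eq_self {x y : α} {t : List α} (hx : x ∉ t) (hy : y ∉ t) :
    t.map (swap x y) = t :=
  List.map_congr_left (fun _ hz => swap_apply_of_ne_of_ne (ne_of_mem_of_not_mem hz hx)
    (ne_of_mem_of_not_mem hz hy)) |>.trans (List.map_id t)

lemma restrictOrd_append_cons_cons (S : Finset α) {l₁ l₂ : List α} {x y : α}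
    (hnd : (l₁ ++ x :: y :: l₂).Nodup) :
    restrictOrd (l₁ ++ y :: x :: l₂) S =
      swapWithin S s(x, y) (restrictOrd (l₁ ++ x :: y :: l₂) S) := by
  rw [swapWithin_mk]
  split_ifs with hxyS
  · have hdisj := List.disjoint_of_nodup_append hnd
    have hnd₂ := (List.nodup_append.mp hnd).2.1
    simp only [List.nodup_cons, List.mem_cons, not_or] at hnd₂
    have hx₁ : x ∉ l₁ := fun h => hdisj h List.mem_cons_self
    have hy₁ : y ∉ l₁ := fun h => hdisj h (List.mem_cons_of_mem _ List.mem_cons_self)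
    simp only [restrictOrd, List.filter_append, List.filter_cons, hxyS.1, hxyS.2, decide_true,
      if_true, List.map_append, List.map_cons, swap_apply_left, swap_apply_right]
    rw [map_swap_eq_self (fun h => hx₁ (List.mem_of_mem_filter h))
        (fun h => hy₁ (List.mem_of_mem_filter h)),
      map_swap_eq_self (fun h => hnd₂.1.2 (List.mem_of_mem_filter h))
        (fun h => hnd₂.2.1 (List.mem_of_mem_filter h))]
  · simp only [restrictOrd, List.filter_append, List.filter_cons, decide_eq_true_eq]
    by_cases hx : x ∈ S <;> by_cases hy : y ∈ S <;> simp_all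

lemma switchSeq_cons_cons {R U : List α} {p : Sym2 α} (h : switchPair? R U = some p)
    (P : List (List α)) :
    switchSeq (R :: U :: P) = p :: switchSeq (U :: P) := by
  simp [switchSeq, List.zip_cons_cons, h]

lemma map_restrictOrd_eq_swapTrace (S : Finset α) {R : List α} {P : List (List α)}
    (hchain : (R :: P).IsChain Alike) (hnd : ∀ l ∈ R :: P, l.Nodup) :
    (R :: P).map (restrictOrd · S) = swapTrace S (restrictOrd R S) (switchSeq (R :: P)) := by
  induction P generalizing R with
  | nil => simp [switchSeq, swapTrace]
  | cons U P ih =>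
    obtain ⟨⟨l₁, l₂, x, y, hxy, rfl, rfl⟩, hchain'⟩ := List.isChain_cons_cons.mp hchain
    rw [switchSeq_cons_cons (switchPair?_append_cons_cons hxy l₁ l₂), List.map_cons, swapTrace,
      ← restrictOrd_append_cons_cons S (hnd _ List.mem_cons_self),
      ih hchain' (fun l hl => hnd l (List.mem_cons_of_mem _ hl))]

lemma mem_restrictDom_setOf_mem {P : List (List α)} {S : Finset α} {m : List α} :
    m ∈ restrictDom {l | l ∈ P} S ↔ m ∈ P.map (restrictOrd · S) := by
  simp [restrictDom, eq_comm]

lemma restrictDom_union (D E : Set (List α)) (S : Finset α) :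
    restrictDom (D ∪ E) S = restrictDom D S ∪ restrictDom E S :=
  Set.image_union _ D E

lemma restrictDom_eq_of_pathEquiv {A S : Finset α} (hS : S.card ≤ 3) {R : List α}
    {P Q : List (List α)} (hP : IsPathOn A P) (hQ : IsPathOn A Q) (hPR : P.head? = some R)
    (hQR : Q.head? = some R) (hequiv : PathEquiv P Q) :
    restrictDom {l | l ∈ Q} S = restrictDom {l | l ∈ P} S := by
  obtain ⟨P, rfl⟩ := List.head?_eq_some_iff.mp hPR
  obtain ⟨Q, rfl⟩ := List.head?_eq_some_iff.mp hQR
  ext m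
  rw [mem_restrictDom_setOf_mem, mem_restrictDom_setOf_mem,
    map_restrictOrd_eq_swapTrace S hP.2.2 (fun l hl => (hP.2.1 l hl).1),
    map_restrictOrd_eq_swapTrace S hQ.2.2 (fun l hl => (hQ.2.1 l hl).1)]
  exact (mem_swapTrace_iff_of_reflTransGen hS hequiv _ m).symm

end

theorem equiv_path_union_peakPit_general [DecidableEq α] (A : Finset α)
    (D : Set (List α))
    (R T : List α) (P Q : List (List α))
    (hP : IsPath A P R T) (hQ : IsPath A Q R T) (hequiv : PathEquiv P Q)
    (hPA : IsPeakPitDomain A (D ∪ {l | l ∈ P})) :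
    IsPeakPitDomain A (D ∪ {l | l ∈ Q}) ∧
      ∀ a b c : α, a ∈ A → b ∈ A → c ∈ A → a ≠ b → a ≠ c → b ≠ c →
        ∀ x ∈ ({a, b, c} : Finset α), ∀ k : Fin 3,
          (NeverCond (restrictDom (D ∪ {l | l ∈ Q}) {a, b, c}) x k ↔
            NeverCond (restrictDom (D ∪ {l | l ∈ P}) {a, b, c}) x k) := by
  have hrest (a b c : α) :
      restrictDom (D ∪ {l | l ∈ Q}) {a, b, c} = restrictDom (D ∪ {l | l ∈ P}) {a, b, c} := by
    rw [restrictDom_union, restrictDom_union, restrictDom_eq_of_pathEquiv Finset.card_le_three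
      hP.1 hQ.1 hP.2.1 hQ.2.1 hequiv]
  have hlin : ∀ l ∈ D ∪ {l | l ∈ Q}, IsLinOrd A l := by
    rintro l (hl | hl)
    exacts [hPA.1 l (Or.inl hl), hQ.1.2.1 l hl]
  refine ⟨⟨hlin, fun a b c ha hb hc hab hac hbc => ?_⟩, fun a b c _ _ _ _ _ _ x _ k => ?_⟩
  · rw [hrest]
    exact hPA.2 a b c ha hb hc hab hac hbc
  · rw [hrest]

/-- Let `D ⊆ L(A)` be a peak-pit Condorcet domain and let `𝒜`
and `ℬ` be equivalent paths of alike linear orders (connecting the same pair of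
linear orders) such that `D ∪ K(𝒜)` is a peak-pit Condorcet domain.  Then
`D ∪ K(ℬ)` is a peak-pit Condorcet domain satisfying exactly the same set of
never-conditions as `D ∪ K(𝒜)`. -/
theorem equiv_path_union_peakPit [DecidableEq α] (A : Finset α)
    (D : Set (List α)) (hD : IsPeakPitDomain A D)
    (R T : List α) (P Q : List (List α))
    (hP : IsPath A P R T) (hQ : IsPath A Q R T) (hequiv : PathEquiv P Q)
    (hPA : IsPeakPitDomain A (D ∪ {l | l ∈ P})) :
    IsPeakPitDomain A (D ∪ {l | l ∈ Q}) ∧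
      ∀ a b c : α, a ∈ A → b ∈ A → c ∈ A → a ≠ b → a ≠ c → b ≠ c →
        ∀ x ∈ ({a, b, c} : Finset α), ∀ k : Fin 3,
          (NeverCond (restrictDom (D ∪ {l | l ∈ Q}) {a, b, c}) x k ↔
            NeverCond (restrictDom (D ∪ {l | l ∈ P}) {a, b, c}) x k) :=
  equiv_path_union_peakPit_general A D R T P Q hP hQ hequiv hPA
end
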